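/- (Hyers–Ulam stability) Let X and Y be real Banach spaces, ε > 0, and let f : X → Y satisfy ‖f(x+y) − f(x) − f(y)‖ ≤ ε for all x, y ∈ X. Then there exists a unique additive mapping g : X → Y (i.e. g(x+y) = g(x) + g(y) for all x, y ∈ X) such that ‖f(x) − g(x)‖ ≤ ε for all x ∈ X. -/

import Mathlib

/-!
Hyers' direct method. Consecutive terms of `2⁻ⁿ f (2ⁿ x)` differ by `2⁻⁽ⁿ⁺¹⁾` times an additive
defect of `f`, so the sequence is Cauchy and telescoping keeps its limit `g x` within
`ε/2 · ∑ 2⁻ⁿ = ε` of `f x`. The defect of the `n`-th term is at most `2⁻ⁿ ε`, so `g` is additive.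
An additive map is fixed by `h ↦ 2⁻ⁿ h (2ⁿ ·)`, so for any additive `g'` at bounded distance
from `f` the same sequence converges to `g' x`, which forces `g' = g`.
-/

open Filter Topology

namespace HyersUlam

variable {X Y : Type*} [AddCommMonoid X] [NormedAddCommGroup Y] [NormedSpace ℝ Y]

noncomputable def approx (f : X → Y) (x : X) (n : ℕ) : Y := (2⁻¹ : ℝ) ^ n • f (2 ^ n • x)

@[simp]
lemma approx_zero (f : X → Y) (x : X) : approx f x 0 = f x := by
  simp [approx]

lemma tendsto_const_mul_inv_two_pow (C : ℝ) :
    Tendsto (fun n : ℕ => C * (2⁻¹ : ℝ) ^ n) atTop (𝓝 0) := by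
  simpa using
    (tendsto_pow_atTop_nhds_zero_of_lt_one (r := (2⁻¹ : ℝ)) (by norm_num) (by norm_num)).const_mul C

lemma norm_approx_sub_approx_le {f g : X → Y} {C : ℝ} (h : ∀ x, ‖f x - g x‖ ≤ C) (x : X)
    (n : ℕ) : ‖approx f x n - approx g x n‖ ≤ C * (2⁻¹ : ℝ) ^ n := by
  rw [approx, approx, ← smul_sub, norm_smul, norm_pow, norm_inv, Real.norm_ofNat, mul_comm]
  gcongr
  exact h _

lemma approx_of_map_add {g : X → Y} (hg : ∀ x y, g (x + y) = g x + g y) (x : X) (n : ℕ) :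
    approx g x n = g x := by
  have hpow : g (2 ^ n • x) = 2 ^ n • g x := map_nsmul (AddMonoidHom.mk' g hg) (2 ^ n) x
  rw [approx, hpow, ← Nat.cast_smul_eq_nsmul ℝ, smul_smul]
  simp

lemma tendsto_approx_of_map_add {f g : X → Y} {C : ℝ} (hg : ∀ x y, g (x + y) = g x + g y)
    (hfg : ∀ x, ‖f x - g x‖ ≤ C) (x : X) : Tendsto (approx f x) atTop (𝓝 (g x)) := by
  rw [tendsto_iff_norm_sub_tendsto_zero]
  refine squeeze_zero (fun _ => norm_nonneg _) (fun n => ?_) (tendsto_const_mul_inv_two_pow C)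
  simpa only [approx_of_map_add hg] using norm_approx_sub_approx_le hfg x n

variable {f : X → Y} {ε : ℝ}

lemma dist_approx_succ_le (hf : ∀ x y, ‖f (x + y) - f x - f y‖ ≤ ε) (x : X) (n : ℕ) :
    dist (approx f x n) (approx f x (n + 1)) ≤ ε / 2 * (2⁻¹ : ℝ) ^ n := by
  rw [dist_eq_norm, approx, approx]
  set z := 2 ^ n • x
  have hz : 2 ^ (n + 1) • x = z + z := by rw [pow_succ, mul_nsmul, two_nsmul]
  have hdiff : (2⁻¹ : ℝ) ^ n • f z - (2⁻¹ : ℝ) ^ (n + 1) • f (z + z) =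
      (2⁻¹ : ℝ) ^ (n + 1) • (f z + f z - f (z + z)) := by
    rw [smul_sub, ← two_smul ℝ (f z), smul_smul, pow_succ, mul_assoc]
    norm_num
  have hdefect : ‖f z + f z - f (z + z)‖ ≤ ε := by
    rw [norm_sub_rev, sub_add_eq_sub_sub]; exact hf z z
  rw [hz, hdiff, norm_smul, norm_pow, norm_inv, Real.norm_ofNat]
  calc (2⁻¹ : ℝ) ^ (n + 1) * ‖f z + f z - f (z + z)‖ ≤ (2⁻¹ : ℝ) ^ (n + 1) * ε := by gcongr
    _ = ε / 2 * (2⁻¹ : ℝ) ^ n := by ring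

lemma cauchySeq_approx (hf : ∀ x y, ‖f (x + y) - f x - f y‖ ≤ ε) (x : X) :
    CauchySeq (approx f x) :=
  cauchySeq_of_le_geometric _ _ (by norm_num) (dist_approx_succ_le hf x)

lemma norm_approx_add_sub_le (hf : ∀ x y, ‖f (x + y) - f x - f y‖ ≤ ε) (x y : X) (n : ℕ) :
    ‖approx f (x + y) n - approx f x n - approx f y n‖ ≤ ε * (2⁻¹ : ℝ) ^ n := by
  rw [approx, approx, approx, nsmul_add, ← smul_sub, ← smul_sub, norm_smul, norm_pow, norm_inv,
    Real.norm_ofNat, mul_comm]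
  gcongr
  exact hf _ _

noncomputable def limit (f : X → Y) (x : X) : Y := limUnder atTop (approx f x)

variable [CompleteSpace Y]

lemma tendsto_approx_limit (hf : ∀ x y, ‖f (x + y) - f x - f y‖ ≤ ε) (x : X) :
    Tendsto (approx f x) atTop (𝓝 (limit f x)) :=
  (cauchySeq_approx hf x).tendsto_limUnder

lemma norm_sub_limit_le (hf : ∀ x y, ‖f (x + y) - f x - f y‖ ≤ ε) (x : X) :
    ‖f x - limit f x‖ ≤ ε := by
  have hgeom := dist_le_of_le_geometric_of_tendsto₀ _ _ (by norm_num) (dist_approx_succ_le hf x)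
    (tendsto_approx_limit hf x)
  rw [approx_zero, dist_eq_norm] at hgeom
  convert hgeom using 1
  ring

lemma limit_add (hf : ∀ x y, ‖f (x + y) - f x - f y‖ ≤ ε) (x y : X) :
    limit f (x + y) = limit f x + limit f y := by
  have hdefect : Tendsto (fun n => approx f (x + y) n - approx f x n - approx f y n) atTop
      (𝓝 (limit f (x + y) - limit f x - limit f y)) :=
    ((tendsto_approx_limit hf _).sub (tendsto_approx_limit hf x)).sub (tendsto_approx_limit hf y)
  have hzero : Tendsto (fun n => approx f (x + y) n - approx f x n - approx f y n) atTop (𝓝 0) :=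
    squeeze_zero_norm (norm_approx_add_sub_le hf x y) (tendsto_const_mul_inv_two_pow ε)
  rw [← sub_eq_zero, ← sub_sub]
  exact tendsto_nhds_unique hdefect hzero

end HyersUlam

theorem hyers_ulam_stability
    {X Y : Type*} [NormedAddCommGroup X]
    [NormedAddCommGroup Y] [NormedSpace ℝ Y] [CompleteSpace Y]
    (ε : ℝ) (f : X → Y)
    (hf : ∀ x y : X, ‖f (x + y) - f x - f y‖ ≤ ε) :
    ∃! g : X → Y, (∀ x y : X, g (x + y) = g x + g y) ∧ ∀ x : X, ‖f x - g x‖ ≤ ε := by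
  refine ⟨HyersUlam.limit f, ⟨HyersUlam.limit_add hf, HyersUlam.norm_sub_limit_le hf⟩, ?_⟩
  rintro g ⟨hg, hfg⟩
  funext x
  exact tendsto_nhds_unique (HyersUlam.tendsto_approx_of_map_add hg hfg x)
    (HyersUlam.tendsto_approx_limit hf x)
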